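/- The maximum principle fails on the bi-tree: for every constant C > 0 there exist an integer N ≥ 1 and a measure μ on the boundary of the bi-tree T² of depth N such that V^μ(α) ≤ 1 for every α in supp μ, yet sup_{α∈T²} V^μ(α) ≥ C. -/

import Mathlib

open Finset

def strings : ℕ → Finset (List Bool)
  | 0 => {([] : List Bool)}
  | N + 1 =>
      {([] : List Bool)} ∪ (strings N).image (List.cons true) ∪ (strings N).image (List.cons false)

/-- Vertices of the bi-tree `T²` of depth `N`: pairs of binary strings of length at most `N`,
ordered by `(α,β) ≤ (α',β')` iff `α' <+: α` and `β' <+: β`. -/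
def biVertices (N : ℕ) : Finset (List Bool × List Bool) := strings N ×ˢ strings N

/-- `𝕀 f (p) = ∑_{p' ≥ p} f p'`. -/
noncomputable def biI (N : ℕ) (f : List Bool × List Bool → ℝ) (p : List Bool × List Bool) : ℝ :=
  ∑ q ∈ (biVertices N).filter (fun q => q.1 <+: p.1 ∧ q.2 <+: p.2), f q

/-- `𝕀* f (p) = ∑_{p' ≤ p} f p'`. -/
noncomputable def biIstar (N : ℕ) (f : List Bool × List Bool → ℝ) (p : List Bool × List Bool) : ℝ :=
  ∑ q ∈ (biVertices N).filter (fun q => p.1 <+: q.1 ∧ p.2 <+: q.2), f q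

/-- The potential `V^μ = 𝕀 (𝕀* μ)` on the bi-tree. -/
noncomputable def biV (N : ℕ) (μ : List Bool × List Bool → ℝ) : List Bool × List Bool → ℝ :=
  biI N (biIstar N μ)

/-- The total mass `|μ|`. -/
noncomputable def biMass (N : ℕ) (μ : List Bool × List Bool → ℝ) : ℝ :=
  ∑ p ∈ biVertices N, μ p

/-- A measure on the boundary `∂T²`: a nonnegative function vanishing off pairs of strings
both of length exactly `N`. -/
def IsBiMeasureOnBoundary (N : ℕ) (μ : List Bool × List Bool → ℝ) : Prop :=
  (∀ p, 0 ≤ μ p) ∧ ∀ p, μ p ≠ 0 → p.1.length = N ∧ p.2.length = N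

/-- The energy `E[ν] = ∑_{α∈T²} (𝕀*ν(α))²`. -/
noncomputable def biEnergy (N : ℕ) (ν : List Bool × List Bool → ℝ) : ℝ :=
  ∑ p ∈ biVertices N, (biIstar N ν p) ^ 2

/-- The partial energy `E_ε[ν] = ∑_{α∈T² : V^ν(α) ≤ ε} (𝕀*ν(α))²`. -/
noncomputable def biPartialEnergy (N : ℕ) (ν : List Bool × List Bool → ℝ) (ε : ℝ) : ℝ :=
  ∑ p ∈ (biVertices N).filter (fun p => biV N ν p ≤ ε), (biIstar N ν p) ^ 2

/-- `cap(E) = inf { ∑ f² : f ≥ 0, 𝕀f ≥ 1 on E }` on the bi-tree of depth `N`. -/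
noncomputable def biCap (N : ℕ) (E : Set (List Bool × List Bool)) : ℝ :=
  sInf { t : ℝ | ∃ f : List Bool × List Bool → ℝ, (∀ p, 0 ≤ f p) ∧
    (∀ p ∈ E, 1 ≤ biI N f p) ∧ t = ∑ p ∈ biVertices N, (f p) ^ 2 }

/-- Superadditivity in each variable on the bi-tree of depth `N`. -/
def BiSuperadditive (N : ℕ) (g : List Bool × List Bool → ℝ) : Prop :=
  (∀ α β : List Bool, α.length < N → β.length ≤ N →
    g (α ++ [false], β) + g (α ++ [true], β) ≤ g (α, β)) ∧
  (∀ α β : List Bool, α.length ≤ N → β.length < N →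
    g (α, β ++ [false]) + g (α, β ++ [true]) ≤ g (α, β))

/-! The potential of a product measure `μ₁ ⊗ μ₂` factors as `V^{μ₁}(α) · V^{μ₂}(β)`. Take the
`n + 1` boxes `ω_k × τ_k` branching off the all-`true` ray at depths `2^k` and `2^(n-k)`, each
carrying the product of the uniform probability measures on the leaves below `ω_k` and `τ_k`,
with weight `1 / (75 · 2^n)`. At the corner `(1^N, 1^N)` each box contributes
`2^k · 2^(n-k) / (75 · 2^n) = 1/75`, so `V^μ ≥ (n + 1)/75`. The ancestors of a leaf below `ω_j`
that lie above `ω_k` have depth at most `min (2^k) (2^j) + 1`, and its other ancestors contribute a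
geometric tail, so on box `j` box `k` contributes at most `2^(-|k-j|)/3`, and `V^μ ≤ 1` on the
support. -/

lemma sum_range_half_pow_dist_le (n j : ℕ) :
    ∑ k ∈ range n, (1 / 2 : ℝ) ^ ((k - j) + (j - k)) ≤ 3 := calc
  _ ≤ ∑ k ∈ range ((j + 1) + n), (1 / 2 : ℝ) ^ ((k - j) + (j - k)) :=
    sum_le_sum_of_subset_of_nonneg (range_subset_range.2 (by omega)) fun _ _ _ => by positivity
  _ = ∑ k ∈ range (j + 1), (1 / 2 : ℝ) ^ k + (1 / 2) * ∑ i ∈ range n, (1 / 2 : ℝ) ^ i := by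
    rw [sum_range_add, ← sum_range_reflect, mul_sum]
    congr 1
    · refine sum_congr rfl fun k hk => ?_
      rw [mem_range] at hk
      congr 1
      omega
    · refine sum_congr rfl fun i _ => ?_
      rw [← pow_succ']
      congr 1
      omega
  _ ≤ 2 + (1 / 2) * 2 := by gcongr <;> exact sum_geometric_two_le _
  _ = 3 := by norm_num

lemma two_pow_min_mul_two_pow_min {n k j : ℕ} (hk : k ≤ n) (hj : j ≤ n) :
    (2 : ℝ) ^ min k j * 2 ^ min (n - k) (n - j) = 2 ^ n * (1 / 2) ^ ((k - j) + (j - k)) := by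
  have hsplit : (2 : ℝ) ^ n = 2 ^ (min k j + min (n - k) (n - j)) * 2 ^ ((k - j) + (j - k)) := by
    rw [← pow_add]
    congr 1
    omega
  rw [hsplit, mul_assoc, ← mul_pow, pow_add]
  norm_num

lemma sum_range_ite_le_le (L m : ℕ) :
    ∑ i ∈ range L, (if i ≤ m then (1 : ℝ) else 0) ≤ m + 1 := by
  rw [sum_boole]
  have : ((range L).filter (· ≤ m)).card ≤ m + 1 :=
    (card_le_card fun i hi => by simp only [mem_filter, mem_range] at hi ⊢; omega).trans
      (card_range _).le
  exact_mod_cast this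

lemma sum_range_ite_half_pow_le (L a : ℕ) :
    ∑ i ∈ range L, (if a ≤ i then (1 / 2 : ℝ) ^ (i - a) else 0) ≤ 2 := calc
  _ ≤ ∑ i ∈ range (a + L), (if a ≤ i then (1 / 2 : ℝ) ^ (i - a) else 0) :=
    sum_le_sum_of_subset_of_nonneg (range_subset_range.2 (by omega)) fun _ _ _ => by positivity
  _ = ∑ i ∈ range L, (1 / 2 : ℝ) ^ i := by
    rw [sum_range_add, sum_eq_zero fun i hi => if_neg (by rw [mem_range] at hi; omega), zero_add]
    simp
  _ ≤ 2 := sum_geometric_two_le L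

lemma mem_strings {N : ℕ} {l : List Bool} : l ∈ strings N ↔ l.length ≤ N := by
  induction N generalizing l with
  | zero => simp [strings, List.length_eq_zero_iff]
  | succ n ih =>
    cases l with
    | nil => simp [strings]
    | cons b t => cases b <;> simp [strings, ih]

def leavesBelow (N : ℕ) (y : List Bool) : Finset (List Bool) :=
  (strings N).filter fun a => a.length = N ∧ y <+: a

lemma card_leavesBelow {N : ℕ} {y : List Bool} (hy : y.length ≤ N) :
    (leavesBelow N y).card = 2 ^ (N - y.length) := by
  have : leavesBelow N y = univ.image fun v : List.Vector Bool (N - y.length) => y ++ v.toList := by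
    ext a
    simp only [leavesBelow, mem_filter, mem_strings, mem_image, mem_univ, true_and]
    constructor
    · rintro ⟨-, ha, t, rfl⟩
      exact ⟨⟨t, by rw [List.length_append] at ha; omega⟩, rfl⟩
    · rintro ⟨v, rfl⟩
      simp only [List.length_append, List.Vector.toList_length, List.prefix_append, and_true]
      omega
  rw [this, card_image_of_injective _ fun v w h => List.Vector.toList_injective
    (List.append_right_injective y h), card_univ, card_vector, Fintype.card_bool]

lemma leavesBelow_inter_leavesBelow_of_prefix {N : ℕ} {x y : List Bool} (h : x <+: y) :
    leavesBelow N x ∩ leavesBelow N y = leavesBelow N y := by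
  ext a
  simp only [leavesBelow, mem_inter, mem_filter]
  exact ⟨fun h => h.2, fun hy => ⟨⟨hy.1, hy.2.1, h.trans hy.2.2⟩, hy⟩⟩

lemma leavesBelow_inter_leavesBelow_eq_empty {N : ℕ} {x y : List Bool} (hxy : ¬x <+: y)
    (hyx : ¬y <+: x) : leavesBelow N x ∩ leavesBelow N y = ∅ := by
  ext a
  simp only [leavesBelow, mem_inter, mem_filter, Finset.notMem_empty, iff_false]
  rintro ⟨⟨-, -, hx⟩, -, -, hy⟩
  rcases List.prefix_or_prefix_of_prefix hx hy with h | h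
  exacts [hxy h, hyx h]

noncomputable def treeI (N : ℕ) (f : List Bool → ℝ) (x : List Bool) : ℝ :=
  ∑ y ∈ (strings N).filter (· <+: x), f y

noncomputable def treeIstar (N : ℕ) (f : List Bool → ℝ) (x : List Bool) : ℝ :=
  ∑ y ∈ (strings N).filter (x <+: ·), f y

noncomputable def treeV (N : ℕ) (f : List Bool → ℝ) : List Bool → ℝ :=
  treeI N (treeIstar N f)

lemma sum_filter_biVertices_mul (N : ℕ) (P Q : List Bool → Prop) [DecidablePred P]
    [DecidablePred Q] (f g : List Bool → ℝ) :
    ∑ q ∈ (biVertices N).filter (fun q => P q.1 ∧ Q q.2), f q.1 * g q.2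
      = (∑ a ∈ (strings N).filter P, f a) * ∑ b ∈ (strings N).filter Q, g b := by
  rw [biVertices, filter_product, sum_product, sum_mul_sum]

lemma sum_filter_biVertices_sum_mul {ι : Type*} (N : ℕ) (P Q : List Bool → Prop)
    [DecidablePred P] [DecidablePred Q] (s : Finset ι) (w : ι → ℝ) (f g : ι → List Bool → ℝ) :
    ∑ q ∈ (biVertices N).filter (fun q => P q.1 ∧ Q q.2), ∑ k ∈ s, w k * (f k q.1 * g k q.2)
      = ∑ k ∈ s, w k *
          ((∑ a ∈ (strings N).filter P, f k a) * ∑ b ∈ (strings N).filter Q, g k b) := by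
  rw [Finset.sum_comm]
  refine Finset.sum_congr rfl fun k _ => ?_
  rw [← mul_sum, sum_filter_biVertices_mul]

lemma biV_sum_mul {ι : Type*} (N : ℕ) (s : Finset ι) (w : ι → ℝ) (f g : ι → List Bool → ℝ)
    (p : List Bool × List Bool) :
    biV N (fun q => ∑ k ∈ s, w k * (f k q.1 * g k q.2)) p
      = ∑ k ∈ s, w k * (treeV N (f k) p.1 * treeV N (g k) p.2) := by
  have hIstar : biIstar N (fun q => ∑ k ∈ s, w k * (f k q.1 * g k q.2))
      = fun q => ∑ k ∈ s, w k * (treeIstar N (f k) q.1 * treeIstar N (g k) q.2) :=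
    funext fun q => sum_filter_biVertices_sum_mul N (q.1 <+: ·) (q.2 <+: ·) s w f g
  rw [biV, hIstar, biI]
  exact sum_filter_biVertices_sum_mul N (· <+: p.1) (· <+: p.2) s w _ _

noncomputable def uniformBelow (N : ℕ) (ω a : List Bool) : ℝ :=
  if a.length = N ∧ ω <+: a then (1 / 2) ^ (N - ω.length) else 0

lemma uniformBelow_nonneg (N : ℕ) (ω a : List Bool) : 0 ≤ uniformBelow N ω a := by
  unfold uniformBelow; positivity

lemma of_uniformBelow_ne_zero {N : ℕ} {ω a : List Bool} (h : uniformBelow N ω a ≠ 0) :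
    a.length = N ∧ ω <+: a := by
  by_contra hc
  exact h (if_neg hc)

lemma treeIstar_uniformBelow {N : ℕ} {ω x : List Bool} (hω : ω.length ≤ N) (hx : x.length ≤ N) :
    treeIstar N (uniformBelow N ω) x = if x <+: ω then 1
      else if ω <+: x then (1 / 2) ^ (x.length - ω.length) else 0 := by
  have hcard : treeIstar N (uniformBelow N ω) x
      = (leavesBelow N x ∩ leavesBelow N ω).card * (1 / 2 : ℝ) ^ (N - ω.length) := by
    simp only [treeIstar, uniformBelow]
    rw [← sum_filter, sum_const, nsmul_eq_mul, filter_filter]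
    congr 3
    ext a
    simp only [leavesBelow, mem_filter, mem_inter]
    tauto
  have hhalf : ∀ m : ℕ, (2 ^ m : ℕ) * (1 / 2 : ℝ) ^ m = 1 := fun m => by
    rw [Nat.cast_pow, ← mul_pow]; norm_num
  rw [hcard]
  split_ifs with hxω hωx
  · rw [leavesBelow_inter_leavesBelow_of_prefix hxω, card_leavesBelow hω, hhalf]
  · rw [inter_comm, leavesBelow_inter_leavesBelow_of_prefix hωx, card_leavesBelow hx,
      show N - ω.length = (N - x.length) + (x.length - ω.length) by
        have := hωx.length_le; omega, pow_add, ← mul_assoc, hhalf, one_mul]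
  · rw [leavesBelow_inter_leavesBelow_eq_empty hxω hωx, card_empty, Nat.cast_zero, zero_mul]

lemma treeI_eq_sum_take {N : ℕ} (f : List Bool → ℝ) {α : List Bool} (hα : α.length ≤ N) :
    treeI N f α = ∑ i ∈ range (α.length + 1), f (α.take i) := by
  have : (strings N).filter (· <+: α) = (range (α.length + 1)).image α.take := by
    ext x
    simp only [mem_filter, mem_strings, mem_image, mem_range]
    constructor
    · rintro ⟨-, hx⟩
      exact ⟨x.length, Nat.lt_succ_of_le hx.length_le, (List.prefix_iff_eq_take.mp hx).symm⟩
    · rintro ⟨i, -, rfl⟩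
      exact ⟨(List.length_take_le' _ _).trans hα, List.take_prefix _ _⟩
  rw [treeI, this, sum_image]
  intro i hi j hj hij
  simp only [coe_range, Set.mem_Iio] at hi hj
  simpa [Nat.lt_succ_iff.mp hi, Nat.lt_succ_iff.mp hj] using congrArg List.length hij

lemma treeIstar_uniformBelow_nonneg (N : ℕ) (ω x : List Bool) :
    0 ≤ treeIstar N (uniformBelow N ω) x :=
  sum_nonneg fun _ _ => uniformBelow_nonneg N ω _

lemma treeV_uniformBelow_nonneg (N : ℕ) (ω α : List Bool) :
    0 ≤ treeV N (uniformBelow N ω) α :=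
  sum_nonneg fun _ _ => treeIstar_uniformBelow_nonneg N ω _

lemma le_treeV_uniformBelow {N m : ℕ} {ω α : List Bool} (hω : ω.length ≤ N) (hα : α.length ≤ N)
    (hm : m ≤ α.length) (h : α.take m <+: ω) : (m + 1 : ℝ) ≤ treeV N (uniformBelow N ω) α := by
  rw [treeV, treeI_eq_sum_take _ hα]
  have hone : ∀ i ∈ range (m + 1), treeIstar N (uniformBelow N ω) (α.take i) = 1 := fun i hi => by
    rw [treeIstar_uniformBelow hω ((List.length_take_le' _ _).trans hα),
      if_pos ((List.take_prefix_take_left (Nat.lt_succ_iff.mp (mem_range.mp hi))).trans h)]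
  calc (m + 1 : ℝ) = ∑ i ∈ range (m + 1), treeIstar N (uniformBelow N ω) (α.take i) := by
        rw [sum_congr rfl hone]; simp
    _ ≤ _ := sum_le_sum_of_subset_of_nonneg (range_subset_range.2 (by omega))
        fun _ _ _ => treeIstar_uniformBelow_nonneg N ω _

lemma treeV_uniformBelow_le {N : ℕ} {ω α : List Bool} (hω : ω.length ≤ N) (hα : α.length ≤ N)
    (m : ℕ) (hm : ∀ i ≤ α.length, α.take i <+: ω → i ≤ m) :
    treeV N (uniformBelow N ω) α ≤ m + 3 := by
  rw [treeV, treeI_eq_sum_take _ hα]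
  have hterm : ∀ i ∈ range (α.length + 1), treeIstar N (uniformBelow N ω) (α.take i)
      ≤ (if i ≤ m then 1 else 0) + (if ω.length ≤ i then (1 / 2) ^ (i - ω.length) else 0) := by
    intro i hi
    have hi : i ≤ α.length := Nat.lt_succ_iff.mp (mem_range.mp hi)
    have hlen : (α.take i).length = i := by rw [List.length_take]; omega
    have hfst : (0 : ℝ) ≤ if i ≤ m then 1 else 0 := by positivity
    have hsnd : (0 : ℝ) ≤ if ω.length ≤ i then (1 / 2) ^ (i - ω.length) else 0 := by positivity
    rw [treeIstar_uniformBelow hω (by omega), hlen]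
    by_cases hpre : α.take i <+: ω
    · rw [if_pos hpre, if_pos (hm i hi hpre)]
      linarith
    by_cases hext : ω <+: α.take i
    · have hle : ω.length ≤ i := hlen ▸ hext.length_le
      rw [if_neg hpre, if_pos hext, if_pos hle]
      linarith
    · rw [if_neg hpre, if_neg hext]
      positivity
  calc _ ≤ _ := sum_le_sum hterm
    _ ≤ (m + 1 : ℝ) + 2 := by
      rw [sum_add_distrib]
      exact add_le_add (sum_range_ite_le_le _ m) (sum_range_ite_half_pow_le _ _)
    _ = m + 3 := by ring

def rayBranch (s : ℕ) : List Bool := List.replicate s true ++ [false]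

lemma length_rayBranch (s : ℕ) : (rayBranch s).length = s + 1 := by simp [rayBranch]

lemma take_replicate_prefix_rayBranch {s N : ℕ} (h : s ≤ N) :
    (List.replicate N true).take s <+: rayBranch s := by
  rw [List.take_replicate, min_eq_left h]
  exact List.prefix_append _ _

lemma eq_of_rayBranch_prefix_rayBranch {s t : ℕ} (h : rayBranch t <+: rayBranch s) : t = s := by
  have hts : t ≤ s := by simpa [length_rayBranch] using h.length_le
  by_contra hne
  have hrep : rayBranch t <+: List.replicate s true := by
    have := List.prefix_take_iff.mpr ⟨h, (by rw [length_rayBranch]; omega : _ ≤ s)⟩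
    simpa [rayBranch, List.take_append] using this
  have := hrep.subset (show false ∈ rayBranch t by simp [rayBranch])
  simp at this

lemma le_of_take_prefix_rayBranch {s t i : ℕ} {α : List Bool} (ht : rayBranch t <+: α)
    (hi : i ≤ α.length) (h : α.take i <+: rayBranch s) : i ≤ min s t + 1 := by
  have hlen : (α.take i).length = i := by rw [List.length_take]; omega
  have his : i ≤ s + 1 := by simpa [hlen, length_rayBranch] using h.length_le
  by_contra! hlt
  have hit : t + 1 < i := by omega
  have hpre : rayBranch t <+: α.take i := by
    rw [List.prefix_iff_eq_take.mp ht, length_rayBranch]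
    exact List.take_prefix_take_left hit.le
  have := eq_of_rayBranch_prefix_rayBranch (hpre.trans h)
  omega

lemma le_treeV_uniformBelow_rayBranch {N s : ℕ} (hs : s + 1 ≤ N) :
    (s + 1 : ℝ) ≤ treeV N (uniformBelow N (rayBranch s)) (List.replicate N true) :=
  le_treeV_uniformBelow (by rw [length_rayBranch]; exact hs) (by rw [List.length_replicate])
    (by rw [List.length_replicate]; omega) (take_replicate_prefix_rayBranch (by omega))

lemma treeV_uniformBelow_rayBranch_two_pow_le {N k j : ℕ} {α : List Bool} (hk : 2 ^ k + 1 ≤ N)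
    (hα : α.length ≤ N) (hj : rayBranch (2 ^ j) <+: α) :
    treeV N (uniformBelow N (rayBranch (2 ^ k))) α ≤ 5 * 2 ^ min k j := by
  have hmin : min (2 ^ k) (2 ^ j) = 2 ^ min k j :=
    ((pow_right_mono₀ (by norm_num : 1 ≤ 2)).map_min).symm
  have hone : (1 : ℝ) ≤ 2 ^ min k j := one_le_pow₀ (by norm_num)
  calc _ ≤ ((min (2 ^ k) (2 ^ j) + 1 : ℕ) : ℝ) + 3 :=
        treeV_uniformBelow_le (by rw [length_rayBranch]; exact hk) hα _
          fun i hi h => le_of_take_prefix_rayBranch hj hi h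
    _ ≤ 5 * 2 ^ min k j := by rw [hmin]; push_cast; linarith

noncomputable def rayBoxMeasure (N n : ℕ) : List Bool × List Bool → ℝ := fun q =>
  ∑ k ∈ range (n + 1), (75 * 2 ^ n : ℝ)⁻¹ *
    (uniformBelow N (rayBranch (2 ^ k)) q.1 * uniformBelow N (rayBranch (2 ^ (n - k))) q.2)

lemma exists_of_rayBoxMeasure_ne_zero {N n : ℕ} {p : List Bool × List Bool}
    (h : rayBoxMeasure N n p ≠ 0) : ∃ j ∈ range (n + 1),
      (p.1.length = N ∧ rayBranch (2 ^ j) <+: p.1) ∧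
      (p.2.length = N ∧ rayBranch (2 ^ (n - j)) <+: p.2) := by
  obtain ⟨j, hj, hne⟩ := exists_ne_zero_of_sum_ne_zero h
  exact ⟨j, hj, of_uniformBelow_ne_zero (left_ne_zero_of_mul (right_ne_zero_of_mul hne)),
    of_uniformBelow_ne_zero (right_ne_zero_of_mul (right_ne_zero_of_mul hne))⟩

lemma isBiMeasureOnBoundary_rayBoxMeasure (N n : ℕ) :
    IsBiMeasureOnBoundary N (rayBoxMeasure N n) := by
  refine ⟨fun p => sum_nonneg fun k _ => ?_, fun p hp => ?_⟩
  · have := uniformBelow_nonneg N (rayBranch (2 ^ k)) p.1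
    have := uniformBelow_nonneg N (rayBranch (2 ^ (n - k))) p.2
    positivity
  · obtain ⟨j, -, ⟨h₁, -⟩, h₂, -⟩ := exists_of_rayBoxMeasure_ne_zero hp
    exact ⟨h₁, h₂⟩

lemma biV_rayBoxMeasure_le_one {N n : ℕ} (hN : 2 ^ n + 1 ≤ N) {p : List Bool × List Bool}
    (hp : rayBoxMeasure N n p ≠ 0) : biV N (rayBoxMeasure N n) p ≤ 1 := by
  obtain ⟨j, hj, ⟨hα, hαj⟩, hβ, hβj⟩ := exists_of_rayBoxMeasure_ne_zero hp
  rw [mem_range, Nat.lt_succ_iff] at hj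
  unfold rayBoxMeasure
  rw [biV_sum_mul]
  have hpow : ∀ i ≤ n, 2 ^ i + 1 ≤ N := fun i hi => le_trans (by gcongr; norm_num) hN
  have hterm : ∀ k ∈ range (n + 1), (75 * 2 ^ n : ℝ)⁻¹ *
      (treeV N (uniformBelow N (rayBranch (2 ^ k))) p.1 *
        treeV N (uniformBelow N (rayBranch (2 ^ (n - k)))) p.2)
      ≤ 1 / 3 * (1 / 2) ^ ((k - j) + (j - k)) := by
    intro k hk
    rw [mem_range, Nat.lt_succ_iff] at hk
    have h₁ := treeV_uniformBelow_rayBranch_two_pow_le (hpow k hk) hα.le hαj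
    have h₂ := treeV_uniformBelow_rayBranch_two_pow_le (hpow (n - k) (by omega)) hβ.le hβj
    calc _ ≤ (75 * 2 ^ n : ℝ)⁻¹ * ((5 * 2 ^ min k j) * (5 * 2 ^ min (n - k) (n - j))) := by
          gcongr
          exact treeV_uniformBelow_nonneg _ _ _
      _ = 1 / 3 * (1 / 2) ^ ((k - j) + (j - k)) := by
          rw [mul_mul_mul_comm, two_pow_min_mul_two_pow_min hk hj]
          field_simp
          ring
  calc _ ≤ ∑ k ∈ range (n + 1), 1 / 3 * (1 / 2 : ℝ) ^ ((k - j) + (j - k)) := sum_le_sum hterm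
    _ ≤ 1 := by rw [← mul_sum]; linarith [sum_range_half_pow_dist_le (n + 1) j]

lemma le_biV_rayBoxMeasure {N n : ℕ} (hN : 2 ^ n + 1 ≤ N) :
    ((n : ℝ) + 1) / 75 ≤
      biV N (rayBoxMeasure N n) (List.replicate N true, List.replicate N true) := by
  unfold rayBoxMeasure
  rw [biV_sum_mul]
  have hpow : ∀ i ≤ n, 2 ^ i + 1 ≤ N := fun i hi => le_trans (by gcongr; norm_num) hN
  have hterm : ∀ k ∈ range (n + 1), (1 / 75 : ℝ) ≤ (75 * 2 ^ n : ℝ)⁻¹ *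
      (treeV N (uniformBelow N (rayBranch (2 ^ k))) (List.replicate N true) *
        treeV N (uniformBelow N (rayBranch (2 ^ (n - k)))) (List.replicate N true)) := by
    intro k hk
    rw [mem_range, Nat.lt_succ_iff] at hk
    have h₁ := le_treeV_uniformBelow_rayBranch (hpow k hk)
    have h₂ := le_treeV_uniformBelow_rayBranch (hpow (n - k) (by omega))
    push_cast at h₁ h₂
    calc (1 / 75 : ℝ) = (75 * 2 ^ n : ℝ)⁻¹ * (2 ^ k * 2 ^ (n - k)) := by
          rw [← pow_add, Nat.add_sub_cancel' hk]
          field_simp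
      _ ≤ _ := by
          have : (0 : ℝ) < 2 ^ k := by positivity
          gcongr <;> linarith
  calc ((n : ℝ) + 1) / 75 = ∑ _k ∈ range (n + 1), (1 / 75 : ℝ) := by
        rw [sum_const, card_range, nsmul_eq_mul]; push_cast; ring
    _ ≤ _ := sum_le_sum hterm

/-- **The maximum principle fails on the bi-tree**: for every `C > 0` there are a depth `N`
and a measure `μ` on `∂T²` with `V^μ ≤ 1` on `supp μ` but `sup_{T²} V^μ ≥ C`. -/
theorem stmt1 : ∀ C : ℝ, 0 < C →
    ∃ N : ℕ, 1 ≤ N ∧ ∃ μ : List Bool × List Bool → ℝ,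
      IsBiMeasureOnBoundary N μ ∧
      (∀ p, 0 < μ p → biV N μ p ≤ 1) ∧
      ∃ p ∈ biVertices N, C ≤ biV N μ p := by
  intro C _
  set n := ⌈75 * C⌉₊
  refine ⟨2 ^ n + 1, Nat.le_add_left 1 _, rayBoxMeasure (2 ^ n + 1) n,
    isBiMeasureOnBoundary_rayBoxMeasure _ n, fun p hp => biV_rayBoxMeasure_le_one le_rfl hp.ne',
    (List.replicate (2 ^ n + 1) true, List.replicate (2 ^ n + 1) true),
    by simp [biVertices, mem_strings], ?_⟩
  calc C ≤ ((n : ℝ) + 1) / 75 := by linarith [Nat.le_ceil (75 * C)]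
    _ ≤ _ := le_biV_rayBoxMeasure le_rfl
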